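/- arXiv:2311.07265 — 5 statements merged into one kernel-verified Lean document; each statement's English description precedes it below -/
import Mathlib

section
/- Let C be an 𝔽₂-subspace of V, let i ∈ V, and let f : 𝔽₂^n → ℂ satisfy f ∈ Q(i). Then for every e = (a|b) ∈ V one has W(a,b)f ∈ Q(i + e). Moreover Q(i) = Q(j) whenever i − j ∈ C^⊥ₛ; in particular, if (a|b) ∈ C^⊥ₛ then W(a,b) maps Q(i) into Q(i). -/
open Finset

/-- `V = 𝔽₂ⁿ × 𝔽₂ⁿ`, elements written `(a|b)`. -/
abbrev Vn (n : ℕ) : Type := (Fin n → ZMod 2) × (Fin n → ZMod 2)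

/-- The symplectic inner product `((a|b),(a'|b'))ₛ = a·b' + a'·b`. -/
def symp {n : ℕ} (v w : Vn n) : ZMod 2 :=
  (∑ i, v.1 i * w.2 i) + (∑ i, w.1 i * v.2 i)

lemma symp_add_left {n : ℕ} (a b s : Vn n) : symp (a + b) s = symp a s + symp b s := by
  simp only [symp, Prod.fst_add, Prod.snd_add, Pi.add_apply, add_mul, mul_add,
    Finset.sum_add_distrib]
  ring

lemma symp_smul_left {n : ℕ} (c : ZMod 2) (v s : Vn n) : symp (c • v) s = c * symp v s := by
  simp only [symp, Prod.smul_fst, Prod.smul_snd, Pi.smul_apply, smul_eq_mul, mul_add,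
    Finset.mul_sum]
  congr 1
  · exact Finset.sum_congr rfl fun i _ => by ring
  · exact Finset.sum_congr rfl fun i _ => by ring

/-- The symplectic orthogonal `S^⊥ₛ` of a subset `S ⊆ V`, as an `𝔽₂`-subspace of `V`. -/
def sympOrtho {n : ℕ} (S : Set (Vn n)) : Submodule (ZMod 2) (Vn n) where
  carrier := {v | ∀ s ∈ S, symp v s = 0}
  zero_mem' := by intro s hs; simp [symp]
  add_mem' := by
    intro a b ha hb s hs
    rw [Set.mem_setOf_eq] at *
    rw [symp_add_left, ha s hs, hb s hs, add_zero]
  smul_mem' := by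
    intro c v hv s hs
    rw [Set.mem_setOf_eq] at *
    rw [symp_smul_left, hv s hs, mul_zero]

/-- `ε : 𝔽₂ → ℂ`, `ε(0) = 1`, `ε(1) = -1`. -/
def eps (x : ZMod 2) : ℂ := if x = 0 then 1 else -1

/-- Quantum weight of `(a|b)`: number of positions `i` with `(aᵢ,bᵢ) ≠ (0,0)`. -/
def wQ {n : ℕ} (v : Vn n) : ℕ :=
  (Finset.univ.filter fun i => (v.1 i, v.2 i) ≠ ((0 : ZMod 2), (0 : ZMod 2))).card

/-- Quotient minimum norm `‖x̄‖ = min_{v ∈ x̄} w_Q(v)` on `V ⧸ H`. -/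
noncomputable def qnorm {n : ℕ} (H : Submodule (ZMod 2) (Vn n)) (x : Vn n ⧸ H) : ℕ :=
  sInf {m | ∃ v : Vn n, (Submodule.Quotient.mk v : Vn n ⧸ H) = x ∧ wQ v = m}

/-- Quotient distance `d(x̄,ȳ) = ‖x̄ - ȳ‖` on `V ⧸ H`. -/
noncomputable def qdist {n : ℕ} (H : Submodule (ZMod 2) (Vn n)) (x y : Vn n ⧸ H) : ℕ :=
  qnorm H (x - y)

/-- The operator `W(a,b)` acting on functions `𝔽₂ⁿ → ℂ`: `(W(a,b)f)(x) = ε(b·x)·f(x+a)`. -/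
def Wop {n : ℕ} (a b : Fin n → ZMod 2) (f : (Fin n → ZMod 2) → ℂ) : (Fin n → ZMod 2) → ℂ :=
  fun x => eps (∑ i, b i * x i) * f (x + a)

/-- The joint eigenspace `Q(i)` of the operators `W(c₁,c₂)`, `(c₁|c₂) ∈ C`. -/
def Qset {n : ℕ} (C : Submodule (ZMod 2) (Vn n)) (i : Vn n) : Set ((Fin n → ZMod 2) → ℂ) :=
  {f | ∀ c ∈ C, ∀ x, Wop c.1 c.2 f x = eps (symp i c) * f x}


lemma zmod2_cases (u : ZMod 2) : u = 0 ∨ u = 1 := by revert u; decide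

lemma eps_add (u v : ZMod 2) : eps (u + v) = eps u * eps v := by
  rcases zmod2_cases u with h | h <;> rcases zmod2_cases v with h' | h' <;>
    subst h <;> subst h' <;> simp [eps, (by decide : (1:ZMod 2)+1 = 0)]

lemma eps_sq (u : ZMod 2) : eps u * eps u = 1 := by
  rcases zmod2_cases u with h | h <;> subst h <;> simp [eps]

lemma key_move {n : ℕ} (C : Submodule (ZMod 2) (Vn n)) (i : Vn n)
    (f : (Fin n → ZMod 2) → ℂ) (hf : f ∈ Qset C i) (e : Vn n) :
    Wop e.1 e.2 f ∈ Qset C (i + e) := by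
  intro c hc x
  have h := hf c hc (x + e.1)
  simp only [Wop] at h ⊢
  have hf2 : f (x + e.1 + c.1)
      = eps (∑ k, c.2 k * (x + e.1) k) * (eps (symp i c) * f (x + e.1)) := by
    rw [← h, ← mul_assoc, eps_sq, one_mul]
  rw [add_right_comm x c.1 e.1, hf2]
  rw [show eps (∑ k, c.2 k * x k) *
        (eps (∑ k, e.2 k * (x + c.1) k) *
          (eps (∑ k, c.2 k * (x + e.1) k) * (eps (symp i c) * f (x + e.1))))
      = eps ((∑ k, c.2 k * x k) + (∑ k, e.2 k * (x + c.1) k)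
          + (∑ k, c.2 k * (x + e.1) k) + symp i c) * f (x + e.1) by
    rw [eps_add, eps_add, eps_add]; ring]
  rw [show eps (symp (i + e) c) * (eps (∑ k, e.2 k * x k) * f (x + e.1))
      = eps (symp (i + e) c + ∑ k, e.2 k * x k) * f (x + e.1) by
    rw [eps_add]; ring]
  congr 2
  simp only [symp, Prod.fst_add, Prod.snd_add, Pi.add_apply, mul_add, add_mul,
    Finset.sum_add_distrib]
  have hcomm : ∀ u v : Fin n → ZMod 2, (∑ k, u k * v k) = ∑ k, v k * u k :=
    fun u v => Finset.sum_congr rfl fun k _ => mul_comm _ _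
  ring_nf
  rw [show (2 : ZMod 2) = 0 by decide, mul_zero, zero_add, hcomm e.2 c.1, hcomm c.2 e.1]
  ring

lemma key_eq {n : ℕ} (C : Submodule (ZMod 2) (Vn n)) (i j : Vn n)
    (hij : i - j ∈ sympOrtho (C : Set (Vn n))) : Qset C i = Qset C j := by
  have key : ∀ c ∈ C, symp i c = symp j c := by
    intro c hc
    have h0' : symp (i - j) c = 0 := hij c hc
    have h1 : symp (j + (i - j)) c = symp j c + symp (i - j) c := symp_add_left _ _ _
    rw [add_sub_cancel] at h1
    rw [h1, h0', add_zero]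
  ext f
  constructor <;> intro hf c hc x
  · rw [hf c hc x, key c hc]
  · rw [hf c hc x, key c hc]

/-- If `f ∈ Q(i)` then `W(a,b)f ∈ Q(i + e)` for `e = (a|b)`;
moreover `Q(i) = Q(j)` whenever `i - j ∈ C^⊥ₛ`; in particular, if `(a|b) ∈ C^⊥ₛ`
then `W(a,b)` maps `Q(i)` into `Q(i)`. -/
theorem Wop_maps_Qset (n : ℕ) (hn : 0 < n) (C : Submodule (ZMod 2) (Vn n)) :
    (∀ (i : Vn n), ∀ f ∈ Qset C i, ∀ e : Vn n, Wop e.1 e.2 f ∈ Qset C (i + e)) ∧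
    (∀ i j : Vn n, i - j ∈ sympOrtho (C : Set (Vn n)) → Qset C i = Qset C j) ∧
    (∀ (i : Vn n) (e : Vn n), e ∈ sympOrtho (C : Set (Vn n)) →
      ∀ f ∈ Qset C i, Wop e.1 e.2 f ∈ Qset C i) := by
  refine ⟨fun i f hf e => key_move C i f hf e, key_eq C, ?_⟩
  intro i e he f hf
  have h1 := key_move C i f hf e
  rwa [key_eq C (i + e) i (by simpa using he)] at h1
end

section
/- Let C be an 𝔽₂-subspace of V and i, j ∈ V with i − j ∉ C^⊥ₛ. If f ∈ Q(i) and g ∈ Q(j), then f and g are orthogonal with respect to the standard inner product: Σ_{x ∈ 𝔽₂^n} conj(f(x))·g(x) = 0. -/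
/-! Pick `c ∈ C` with `(i - j, c)ₛ = 1`. Translating by `c₁` leaves `∑ₓ conj(f x) g x` unchanged,
while the eigenvalue equations for `W(c₁,c₂)` turn `conj(f(x + c₁)) g(x + c₁)` into
`ε((i,c)ₛ) ε((j,c)ₛ) conj(f x) g x = -conj(f x) g x` (the signs `ε(c₂·x)` cancel);
so the sum equals its own negative. -/

open Finset

lemma eps_mul_self (t : ZMod 2) : eps t * eps t = 1 := by
  unfold eps; split <;> ring

lemma conj_eps (t : ZMod 2) : starRingEnd ℂ (eps t) = eps t := by
  unfold eps; split <;> simp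

lemma eps_sub (s t : ZMod 2) : eps (s - t) = eps s * eps t := by
  have eq_one : ∀ u : ZMod 2, u ≠ 0 → u = 1 := by decide
  by_cases hs : s = 0 <;> by_cases ht : t = 0 <;> simp [eps, hs, ht, eq_one s, eq_one t]

lemma eps_of_ne_zero {t : ZMod 2} (ht : t ≠ 0) : eps t = -1 := if_neg ht

lemma symp_sub_left {n : ℕ} (a b s : Vn n) : symp (a - b) s = symp a s - symp b s := by
  rw [sub_eq_add_neg, ← neg_one_smul (ZMod 2) b, symp_add_left, symp_smul_left]
  ring

namespace Qset

variable {n : ℕ} {C : Submodule (ZMod 2) (Vn n)} {i c : Vn n} {f : (Fin n → ZMod 2) → ℂ}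

lemma apply_add_fst (hf : f ∈ Qset C i) (hc : c ∈ C) (x : Fin n → ZMod 2) :
    f (x + c.1) = eps (∑ k, c.2 k * x k) * eps (symp i c) * f x := by
  have h : eps (∑ k, c.2 k * x k) * f (x + c.1) = eps (symp i c) * f x := hf c hc x
  rw [mul_assoc, ← h, ← mul_assoc, eps_mul_self, one_mul]

lemma inner_eq_eps_mul_inner {j : Vn n} {g : (Fin n → ZMod 2) → ℂ}
    (hf : f ∈ Qset C i) (hg : g ∈ Qset C j) (hc : c ∈ C) :
    ∑ x, starRingEnd ℂ (f x) * g x =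
      eps (symp (i - j) c) * ∑ x, starRingEnd ℂ (f x) * g x := by
  calc ∑ x, starRingEnd ℂ (f x) * g x
      = ∑ x, starRingEnd ℂ (f (x + c.1)) * g (x + c.1) :=
        (Equiv.sum_comp (Equiv.addRight c.1) fun x => starRingEnd ℂ (f x) * g x).symm
    _ = ∑ x, eps (symp (i - j) c) * (starRingEnd ℂ (f x) * g x) := by
        refine sum_congr rfl fun x _ => ?_
        rw [apply_add_fst hf hc, apply_add_fst hg hc, map_mul, map_mul, conj_eps, conj_eps,
          symp_sub_left, eps_sub]
        linear_combination (eps (symp i c) * eps (symp j c) * (starRingEnd ℂ (f x) * g x)) *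
          eps_mul_self (∑ k, c.2 k * x k)
    _ = eps (symp (i - j) c) * ∑ x, starRingEnd ℂ (f x) * g x := (mul_sum ..).symm

end Qset

theorem Qset_orthogonal_general (n : ℕ) (C : Submodule (ZMod 2) (Vn n)) (i j : Vn n)
    (hij : i - j ∉ sympOrtho (C : Set (Vn n)))
    (f g : (Fin n → ZMod 2) → ℂ) (hf : f ∈ Qset C i) (hg : g ∈ Qset C j) :
    ∑ x : Fin n → ZMod 2, (starRingEnd ℂ) (f x) * g x = 0 := by
  obtain ⟨c, hcC, hc⟩ : ∃ c ∈ C, symp (i - j) c ≠ 0 := by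
    by_contra! h
    exact hij h
  have h := Qset.inner_eq_eps_mul_inner hf hg hcC
  rwa [eps_of_ne_zero hc, neg_one_mul, self_eq_neg] at h

/-- If `i - j ∉ C^⊥ₛ`, then any `f ∈ Q(i)` and `g ∈ Q(j)` are
orthogonal for the standard inner product: `∑ₓ conj(f(x))·g(x) = 0`. -/
theorem Qset_orthogonal (n : ℕ) (hn : 0 < n) (C : Submodule (ZMod 2) (Vn n)) (i j : Vn n)
    (hij : i - j ∉ sympOrtho (C : Set (Vn n)))
    (f g : (Fin n → ZMod 2) → ℂ) (hf : f ∈ Qset C i) (hg : g ∈ Qset C j) :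
    ∑ x : Fin n → ZMod 2, (starRingEnd ℂ) (f x) * g x = 0 :=
  Qset_orthogonal_general n C i j hij f g hf hg
end

section
/- Let C be an 𝔽₂-subspace of V, S ⊆ C a subset, and i, j ∈ V. Let f ∈ Q(i) and g ∈ Q(j) with Σ_x |f(x)|² = Σ_x |g(x)|² ≠ 0. Then Σ_x conj(f(x))·(W(c₁,c₂)f)(x) = Σ_x conj(g(x))·(W(c₁,c₂)g)(x) for every (c₁|c₂) ∈ S if and only if i − j ∈ S^⊥ₛ. -/
open Finset

lemma eps_inj {a b : ZMod 2} (h : eps a = eps b) : a = b := by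
  have hall : ∀ x : ZMod 2, x = 0 ∨ x = 1 := by decide
  have ha := hall a
  have hb := hall b
  rcases ha with ha | ha <;> rcases hb with hb | hb <;>
    simp_all [eps] <;> norm_num at h

lemma sum_conj_W {n : ℕ} (C : Submodule (ZMod 2) (Vn n)) (i : Vn n)
    (f : (Fin n → ZMod 2) → ℂ) (hf : f ∈ Qset C i) (c : Vn n) (hc : c ∈ C) :
    ∑ x : Fin n → ZMod 2, (starRingEnd ℂ) (f x) * Wop c.1 c.2 f x
      = eps (symp i c) * ∑ x : Fin n → ZMod 2, (starRingEnd ℂ) (f x) * f x := by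
  rw [Finset.mul_sum]
  exact Finset.sum_congr rfl fun x _ => by rw [hf c hc x]; ring

/-- For `f ∈ Q(i)`, `g ∈ Q(j)` of equal nonzero norm and `S ⊆ C`:
the expectation values of all `W(c₁,c₂)`, `(c₁|c₂) ∈ S`, on `f` and on `g` agree
iff `i - j ∈ S^⊥ₛ`. -/
theorem measurement_condition (n : ℕ) (hn : 0 < n) (C : Submodule (ZMod 2) (Vn n))
    (S : Set (Vn n)) (hS : S ⊆ (C : Set (Vn n))) (i j : Vn n)
    (f g : (Fin n → ZMod 2) → ℂ) (hf : f ∈ Qset C i) (hg : g ∈ Qset C j)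
    (hnorm : ∑ x : Fin n → ZMod 2, (starRingEnd ℂ) (f x) * f x
      = ∑ x : Fin n → ZMod 2, (starRingEnd ℂ) (g x) * g x)
    (hne : ∑ x : Fin n → ZMod 2, (starRingEnd ℂ) (f x) * f x ≠ 0) :
    (∀ c ∈ S, ∑ x : Fin n → ZMod 2, (starRingEnd ℂ) (f x) * Wop c.1 c.2 f x
        = ∑ x : Fin n → ZMod 2, (starRingEnd ℂ) (g x) * Wop c.1 c.2 g x) ↔
      i - j ∈ sympOrtho S := by
  constructor
  · intro h s hs
    have h1 := sum_conj_W C i f hf s (hS hs)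
    have h2 := sum_conj_W C j g hg s (hS hs)
    have := h s hs
    rw [h1, h2, ← hnorm] at this
    have heps : eps (symp i s) = eps (symp j s) := mul_right_cancel₀ hne this
    have hij : symp i s = symp j s := eps_inj heps
    have key : symp ((i - j) + j) s = symp (i - j) s + symp j s := symp_add_left _ _ _
    rw [sub_add_cancel, hij] at key
    have : symp (i - j) s + symp j s = 0 + symp j s := by rw [← key, zero_add]
    exact add_right_cancel this
  · intro hij s hs
    have h1 := sum_conj_W C i f hf s (hS hs)
    have h2 := sum_conj_W C j g hg s (hS hs)
    have key : symp ((i - j) + j) s = symp (i - j) s + symp j s := symp_add_left _ _ _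
    rw [sub_add_cancel, hij s hs, zero_add] at key
    rw [h1, h2, ← hnorm, key]
end

section
/- (Hamming-type measurement bound) Let C be an 𝔽₂-subspace of V with C ⊆ C^⊥ₛ and dim_{𝔽₂} C = n − k, let d ≥ 1, C(d−1) := {c ∈ C : w_Q(c) ≤ d−1}, s := dim_{𝔽₂} span(C(d−1)), D := C(d−1)^⊥ₛ, and let D̄ be the image of D in V/C^⊥ₛ. Let t := ⌊(d−1)/2⌋ and ME(t) := {ē ∈ D̄ : ‖ē‖ ≤ t}. If Ω ⊆ D̄ is a set of cosets whose pairwise quotient distances are all ≥ d, then 2^k · |Ω| · |ME(t)| ≤ 2^{n−s}. -/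
open Finset

/-!
A packing argument in the quotient `V ⧸ C^⊥ₛ`. The balls of radius `t` (for the quotient norm)
around the points of `Ω` lie in the subspace `D̄` and are pairwise disjoint, because two of them
meeting would put two points of `Ω` at distance `≤ 2t < d`. Hence `|Ω| · |ME(t)| ≤ |D̄|`, and
`|D̄| = 2^(dim D - dim C^⊥ₛ) = 2^((2n - s) - (n + k))` since the symplectic form is nondegenerate.
-/

open Module

section Symplectic

variable {n : ℕ}

lemma symp_comm (v w : Vn n) : symp v w = symp w v := by
  simp only [symp]
  ring

variable (n) in
noncomputable def sympForm : LinearMap.BilinForm (ZMod 2) (Vn n) :=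
  LinearMap.mk₂ (ZMod 2) symp symp_add_left symp_smul_left
    (fun a b c => by rw [symp_comm, symp_add_left, symp_comm b, symp_comm c])
    (fun c a b => by rw [symp_comm, symp_smul_left, symp_comm, smul_eq_mul])

@[simp]
lemma sympForm_apply (v w : Vn n) : sympForm n v w = symp v w := rfl

lemma sympForm_isRefl : (sympForm n).IsRefl := fun v w h => by
  rwa [sympForm_apply, symp_comm] at h

lemma sympForm_nondegenerate : (sympForm n).Nondegenerate := by
  refine (sympForm_isRefl.nondegenerate_iff_separatingLeft).mpr fun v hv => ?_
  ext i
  · simpa [symp, Pi.single_apply] using hv (0, Pi.single i 1)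
  · simpa [symp, Pi.single_apply] using hv (Pi.single i 1, 0)

lemma sympOrtho_eq_orthogonal_span (S : Set (Vn n)) :
    sympOrtho S = (sympForm n).orthogonal (Submodule.span (ZMod 2) S) := by
  ext v
  change (∀ s ∈ S, symp v s = 0) ↔
    Submodule.span (ZMod 2) S ≤ LinearMap.ker ((sympForm n).flip v)
  rw [Submodule.span_le]
  simp [Set.subset_def, symp_comm v]

lemma finrank_sympOrtho (S : Set (Vn n)) :
    finrank (ZMod 2) (sympOrtho S) = 2 * n - finrank (ZMod 2) (Submodule.span (ZMod 2) S) := by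
  rw [sympOrtho_eq_orthogonal_span, LinearMap.BilinForm.finrank_orthogonal sympForm_nondegenerate]
  simp [Module.finrank_prod, two_mul]

end Symplectic

section QuotientNorm

variable {n : ℕ} (H : Submodule (ZMod 2) (Vn n))

lemma wQ_sub_le (u v : Vn n) : wQ (u - v) ≤ wQ u + wQ v := by
  refine (card_le_card fun i hi => ?_).trans (card_union_le _ _)
  simp only [mem_filter, mem_univ, true_and, mem_union, ne_eq, Prod.mk.injEq] at hi ⊢
  contrapose! hi
  simp [hi.1.1, hi.1.2, hi.2.1, hi.2.2]

lemma exists_mk_eq_and_wQ_eq_qnorm (x : Vn n ⧸ H) :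
    ∃ v : Vn n, Submodule.Quotient.mk v = x ∧ wQ v = qnorm H x := by
  obtain ⟨v, hv⟩ := Submodule.Quotient.mk_surjective H x
  exact Nat.sInf_mem (s := {m | ∃ v : Vn n, Submodule.Quotient.mk v = x ∧ wQ v = m})
    ⟨wQ v, v, hv, rfl⟩

lemma qnorm_mk_le (v : Vn n) : qnorm H (Submodule.Quotient.mk v) ≤ wQ v :=
  Nat.sInf_le ⟨v, rfl, rfl⟩

lemma qnorm_sub_le (x y : Vn n ⧸ H) : qnorm H (x - y) ≤ qnorm H x + qnorm H y := by
  obtain ⟨u, rfl, hu⟩ := exists_mk_eq_and_wQ_eq_qnorm H x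
  obtain ⟨v, rfl, hv⟩ := exists_mk_eq_and_wQ_eq_qnorm H y
  rw [← Submodule.Quotient.mk_sub, ← hu, ← hv]
  exact (qnorm_mk_le H _).trans (wQ_sub_le u v)

theorem card_mul_card_ball_le_card_of_packing {E : Submodule (ZMod 2) (Vn n ⧸ H)}
    {Ω : Set (Vn n ⧸ H)} {t : ℕ} (hΩ : Ω ⊆ E)
    (hdist : ∀ x ∈ Ω, ∀ y ∈ Ω, x ≠ y → 2 * t < qdist H x y) :
    Nat.card Ω * Nat.card {e | e ∈ E ∧ qnorm H e ≤ t} ≤ Nat.card E := by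
  rw [← Nat.card_prod]
  refine Nat.card_le_card_of_injective
    (fun p : Ω × {e | e ∈ E ∧ qnorm H e ≤ t} =>
      (⟨p.1 + p.2, E.add_mem (hΩ p.1.2) p.2.2.1⟩ : E)) ?_
  rintro ⟨⟨x, hx⟩, ⟨e, he⟩⟩ ⟨⟨y, hy⟩, ⟨f, hf⟩⟩ hxe
  have hsum : x + e = y + f := congrArg Subtype.val hxe
  obtain rfl : x = y := by
    by_contra hxy
    have hsub : x - y = f - e := by rw [sub_eq_sub_iff_add_eq_add, hsum, add_comm]
    have := (qnorm_sub_le H f e).trans (add_le_add hf.2 he.2)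
    have := hdist x hx y hy hxy
    rw [qdist, hsub] at this
    omega
  obtain rfl : e = f := add_left_cancel hsum
  rfl

end QuotientNorm

lemma finrank_map_mkQ_add_finrank {K M : Type*} [DivisionRing K] [AddCommGroup M] [Module K M]
    {H D : Submodule K M} [FiniteDimensional K D] (hHD : H ≤ D) :
    finrank K (D.map H.mkQ) + finrank K H = finrank K D := by
  have := (H.mkQ.domRestrict D).finrank_range_add_finrank_ker
  rwa [LinearMap.range_domRestrict, LinearMap.ker_domRestrict, Submodule.ker_mkQ,
    (Submodule.comapSubtypeEquivOfLe hHD).finrank_eq] at this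

theorem card_mul_card_ball_le_two_pow_of_packing {n t : ℕ} {H D : Submodule (ZMod 2) (Vn n)}
    (hHD : H ≤ D) {Ω : Set (Vn n ⧸ H)} (hΩ : Ω ⊆ Submodule.Quotient.mk '' D)
    (hdist : ∀ x ∈ Ω, ∀ y ∈ Ω, x ≠ y → 2 * t < qdist H x y) :
    Nat.card Ω * Nat.card {e | e ∈ Submodule.Quotient.mk '' D ∧ qnorm H e ≤ t}
      ≤ 2 ^ (finrank (ZMod 2) D - finrank (ZMod 2) H) := by
  have hrank := finrank_map_mkQ_add_finrank hHD
  have himage : Submodule.Quotient.mk '' (D : Set (Vn n)) = (D.map H.mkQ : Set (Vn n ⧸ H)) :=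
    (Submodule.map_coe H.mkQ D).symm
  rw [himage] at hΩ ⊢
  calc _ ≤ Nat.card (D.map H.mkQ) := card_mul_card_ball_le_card_of_packing H hΩ hdist
    _ = _ := by rw [Module.natCard_eq_pow_finrank (K := ZMod 2), Nat.card_zmod]; congr 1; omega

theorem hamming_measurement_bound_general (n k d : ℕ) (hk : k ≤ n) (hd : 1 ≤ d)
    (C : Submodule (ZMod 2) (Vn n))
    (hC : Module.finrank (ZMod 2) C = n - k) (s : ℕ)
    (hs : s = Module.finrank (ZMod 2)
      (Submodule.span (ZMod 2) {c : Vn n | c ∈ C ∧ wQ c ≤ d - 1}))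
    (Dbar : Set (Vn n ⧸ sympOrtho (C : Set (Vn n))))
    (hDbar : Dbar = (fun v => (Submodule.Quotient.mk v : Vn n ⧸ sympOrtho (C : Set (Vn n)))) ''
      (sympOrtho {c : Vn n | c ∈ C ∧ wQ c ≤ d - 1} : Set (Vn n)))
    (Ω : Set (Vn n ⧸ sympOrtho (C : Set (Vn n)))) (hΩD : Ω ⊆ Dbar)
    (hdist : ∀ x ∈ Ω, ∀ y ∈ Ω, x ≠ y → d ≤ qdist (sympOrtho (C : Set (Vn n))) x y) :
    2 ^ k * Nat.card Ω *
        Nat.card {e : Vn n ⧸ sympOrtho (C : Set (Vn n)) | e ∈ Dbar ∧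
          qnorm (sympOrtho (C : Set (Vn n))) e ≤ (d - 1) / 2}
      ≤ 2 ^ (n - s) := by
  subst hs hDbar
  have hHD : sympOrtho C ≤ sympOrtho {c : Vn n | c ∈ C ∧ wQ c ≤ d - 1} :=
    fun v hv c hc => hv c hc.1
  have hsC : finrank (ZMod 2) (Submodule.span (ZMod 2) {c : Vn n | c ∈ C ∧ wQ c ≤ d - 1})
      ≤ n - k := hC ▸ Submodule.finrank_mono (Submodule.span_le.2 fun _ hc => hc.1)
  have hpack := card_mul_card_ball_le_two_pow_of_packing hHD hΩD (t := (d - 1) / 2)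
    fun x hx y hy hxy => (by omega : 2 * ((d - 1) / 2) < d).trans_le (hdist x hx y hy hxy)
  rw [finrank_sympOrtho, finrank_sympOrtho, Submodule.span_eq, hC] at hpack
  calc 2 ^ k * Nat.card Ω * Nat.card _ ≤ 2 ^ k * 2 ^ (2 * n - _ - (2 * n - (n - k))) := by
        rw [mul_assoc]; exact Nat.mul_le_mul_left _ hpack
    _ = 2 ^ (n - _) := by rw [← pow_add]; congr 1; omega

/-- **Hamming-type measurement bound.** For a self-orthogonal `C` with
`dim C = n - k`, `s = dim span C(d-1)`, `D = C(d-1)^⊥ₛ`, `D̄` its image in `V ⧸ C^⊥ₛ`,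
`t = ⌊(d-1)/2⌋` and `ME(t) = {ē ∈ D̄ : ‖ē‖ ≤ t}`: any `Ω ⊆ D̄` with pairwise quotient
distances `≥ d` satisfies `2^k · |Ω| · |ME(t)| ≤ 2^(n-s)`. -/
theorem hamming_measurement_bound (n k d : ℕ) (hn : 0 < n) (hk : k ≤ n) (hd : 1 ≤ d)
    (C : Submodule (ZMod 2) (Vn n)) (hself : C ≤ sympOrtho (C : Set (Vn n)))
    (hC : Module.finrank (ZMod 2) C = n - k) (s : ℕ)
    (hs : s = Module.finrank (ZMod 2)
      (Submodule.span (ZMod 2) {c : Vn n | c ∈ C ∧ wQ c ≤ d - 1}))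
    (Dbar : Set (Vn n ⧸ sympOrtho (C : Set (Vn n))))
    (hDbar : Dbar = (fun v => (Submodule.Quotient.mk v : Vn n ⧸ sympOrtho (C : Set (Vn n)))) ''
      (sympOrtho {c : Vn n | c ∈ C ∧ wQ c ≤ d - 1} : Set (Vn n)))
    (Ω : Set (Vn n ⧸ sympOrtho (C : Set (Vn n)))) (hΩD : Ω ⊆ Dbar)
    (hdist : ∀ x ∈ Ω, ∀ y ∈ Ω, x ≠ y → d ≤ qdist (sympOrtho (C : Set (Vn n))) x y) :
    2 ^ k * Nat.card Ω *
        Nat.card {e : Vn n ⧸ sympOrtho (C : Set (Vn n)) | e ∈ Dbar ∧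
          qnorm (sympOrtho (C : Set (Vn n))) e ≤ (d - 1) / 2}
      ≤ 2 ^ (n - s) :=
  hamming_measurement_bound_general n k d hk hd C hC s hs Dbar hDbar Ω hΩD hdist
end

section
/- (Singleton bound for quotient space codes) Let q be a prime power, H an 𝔽_q-subspace of 𝔽_q^m with dim_{𝔽_q} H = r, and let d ≥ 1. Let Ω ⊆ 𝔽_q^m/H be a set of cosets with |Ω| ≥ 2 such that for all distinct x̄, ȳ ∈ Ω the quotient Hamming distance min_{v ∈ x̄ − ȳ} w_H(v) is at least d. Then |Ω| · q^{d−1} ≤ q^{m−r}. -/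
/-!
Puncture one coordinate at a time. If `eᵢ ∉ H`, the map `𝔽_qᵐ ⧸ H → 𝔽_qᵐ ⧸ (H + 𝔽_q eᵢ)` lowers
the dimension by exactly one and every quotient distance by at most one, because a representative
may absorb a multiple of `eᵢ` at the cost of a single coordinate. While the minimum distance is at
least `2` the map is therefore injective on `Ω`, and after `d - 1` punctures `Ω` embeds into a
space of dimension `m - r - (d - 1)`.
-/

open Finset

/-- Hamming weight on `𝔽_qᵐ`: the number of nonzero coordinates. -/
def wH {F : Type} [Zero F] [DecidableEq F] {m : ℕ} (v : Fin m → F) : ℕ :=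
  (Finset.univ.filter fun i => v i ≠ 0).card

/-- Quotient minimum Hamming norm on `𝔽_qᵐ ⧸ H`. -/
noncomputable def qnormH {F : Type} [Field F] [Fintype F] [DecidableEq F] {m : ℕ}
    (H : Submodule F (Fin m → F)) (x : (Fin m → F) ⧸ H) : ℕ :=
  sInf {t | ∃ v : Fin m → F, (Submodule.Quotient.mk v : (Fin m → F) ⧸ H) = x ∧ wH v = t}

theorem hammingNorm_single_le_one {ι : Type*} [Fintype ι] [DecidableEq ι] {β : ι → Type*}
    [∀ i, Zero (β i)] [∀ i, DecidableEq (β i)] (i : ι) (c : β i) :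
    hammingNorm (Pi.single i c) ≤ 1 := by
  have hsupp (j : ι) (hj : Pi.single i c j ≠ 0) : j = i :=
    by_contra fun h => hj (Pi.single_eq_of_ne h c)
  exact Finset.card_le_one.2 fun a ha b hb => by
    simp only [Finset.mem_filter, Finset.mem_univ, true_and] at ha hb
    rw [hsupp a ha, hsupp b hb]

theorem hammingNorm_sub_le {ι : Type*} [Fintype ι] {β : ι → Type*} [∀ i, AddCommGroup (β i)]
    [∀ i, DecidableEq (β i)] (x y : ∀ i, β i) :
    hammingNorm (x - y) ≤ hammingNorm x + hammingNorm y := by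
  have h := hammingDist_triangle y 0 x
  rw [hammingDist_zero_right, hammingDist_zero_left, hammingDist_eq_hammingNorm,
    neg_add_eq_sub] at h
  exact h.trans_eq (add_comm _ _)

theorem exists_single_notMem_of_ne_top {R ι : Type*} [Semiring R] [Finite ι] [DecidableEq ι]
    {p : Submodule R (ι → R)} (hp : p ≠ ⊤) : ∃ i : ι, Pi.single i 1 ∉ p := by
  by_contra! h
  refine hp (top_unique ?_)
  rw [← (Pi.basisFun R ι).span_eq, Submodule.span_le]
  rintro _ ⟨i, rfl⟩
  simpa using h i

section QuotientHamming

variable {F : Type} [Field F] [Fintype F] [DecidableEq F] {m : ℕ} {H : Submodule F (Fin m → F)}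

omit [Fintype F] in
theorem wH_eq_hammingNorm (v : Fin m → F) : wH v = hammingNorm v := rfl

theorem qnormH_le_wH {x : (Fin m → F) ⧸ H} {v : Fin m → F} (hv : Submodule.Quotient.mk v = x) :
    qnormH H x ≤ wH v :=
  Nat.sInf_le ⟨v, hv, rfl⟩

theorem exists_wH_eq_qnormH (x : (Fin m → F) ⧸ H) :
    ∃ v : Fin m → F, Submodule.Quotient.mk v = x ∧ wH v = qnormH H x := by
  obtain ⟨v, hv⟩ := Submodule.Quotient.mk_surjective H x
  exact Nat.sInf_mem (s := {t | ∃ v, Submodule.Quotient.mk v = x ∧ wH v = t}) ⟨wH v, v, hv, rfl⟩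

theorem qnormH_eq_zero_iff {x : (Fin m → F) ⧸ H} : qnormH H x = 0 ↔ x = 0 := by
  constructor
  · intro hx
    obtain ⟨v, rfl, hv⟩ := exists_wH_eq_qnormH x
    rw [hx, wH_eq_hammingNorm, hammingNorm_eq_zero] at hv
    rw [hv, Submodule.Quotient.mk_zero]
  · rintro rfl
    exact Nat.eq_zero_of_le_zero
      ((qnormH_le_wH (Submodule.Quotient.mk_zero H)).trans_eq hammingNorm_zero)

theorem qnormH_le_qnormH_factor_add_one (i : Fin m) (x : (Fin m → F) ⧸ H) :
    qnormH H x ≤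
      qnormH _ (Submodule.factor (le_sup_left : H ≤ H ⊔ F ∙ Pi.single i 1) x) + 1 := by
  obtain ⟨v, rfl⟩ := Submodule.Quotient.mk_surjective H x
  obtain ⟨w, hw, hw_norm⟩ := exists_wH_eq_qnormH
    (Submodule.factor (le_sup_left : H ≤ H ⊔ F ∙ Pi.single i 1) (Submodule.Quotient.mk v))
  obtain ⟨a, ha, _, hc, hac⟩ := Submodule.mem_sup.1 ((Submodule.Quotient.eq _).1 hw)
  obtain ⟨c, rfl⟩ := Submodule.mem_span_singleton.1 hc
  have hrep : (Submodule.Quotient.mk (w - c • Pi.single i 1) : (Fin m → F) ⧸ H) =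
      Submodule.Quotient.mk v := by
    rw [LinearMap.id_apply] at hac
    rwa [Submodule.Quotient.eq, sub_right_comm, ← hac, add_sub_cancel_right]
  calc qnormH H (Submodule.Quotient.mk v)
      ≤ wH (w - c • Pi.single i 1) := qnormH_le_wH hrep
    _ ≤ wH w + hammingNorm (c • Pi.single i (1 : F)) := by
        rw [wH_eq_hammingNorm, wH_eq_hammingNorm]
        exact hammingNorm_sub_le _ _
    _ ≤ qnormH _ _ + 1 := by
        rw [hw_norm]
        exact Nat.add_le_add_left
          (hammingNorm_smul_le_hammingNorm.trans (hammingNorm_single_le_one i 1)) _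

theorem injOn_factor_of_pairwise {Ω : Set ((Fin m → F) ⧸ H)} (i : Fin m)
    (hΩ : Ω.Pairwise fun x y => 2 ≤ qnormH H (x - y)) :
    Ω.InjOn (Submodule.factor (le_sup_left : H ≤ H ⊔ F ∙ Pi.single i 1)) := by
  intro x hx y hy hxy
  by_contra hne
  have h := qnormH_le_qnormH_factor_add_one i (x - y)
  rw [map_sub, hxy, sub_self, qnormH_eq_zero_iff.2 rfl] at h
  have := hΩ hx hy hne
  omega

theorem pairwise_image_factor {Ω : Set ((Fin m → F) ⧸ H)} (i : Fin m) {d : ℕ}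
    (hΩ : Ω.Pairwise fun x y => d + 1 ≤ qnormH H (x - y)) :
    (Submodule.factor (le_sup_left : H ≤ H ⊔ F ∙ Pi.single i 1) '' Ω).Pairwise
      fun x y => d ≤ qnormH _ (x - y) := by
  rintro _ ⟨x, hx, rfl⟩ _ ⟨y, hy, rfl⟩ hne
  have h := qnormH_le_qnormH_factor_add_one i (x - y)
  rw [map_sub] at h
  have := hΩ hx hy (ne_of_apply_ne _ hne)
  omega

theorem card_mul_card_pow_le_of_pairwise (d : ℕ) (H : Submodule F (Fin m → F))
    (Ω : Set ((Fin m → F) ⧸ H)) (hΩ : Ω.Nontrivial)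
    (hdist : Ω.Pairwise fun x y => d + 1 ≤ qnormH H (x - y)) :
    Nat.card Ω * Fintype.card F ^ d ≤ Fintype.card F ^ Module.finrank F ((Fin m → F) ⧸ H) := by
  induction d generalizing H Ω with
  | zero =>
    rw [pow_zero, mul_one, ← Nat.card_eq_fintype_card, ← Module.natCard_eq_pow_finrank]
    exact Finite.card_subtype_le _
  | succ d ih =>
    have hH : H ≠ ⊤ := by
      rintro rfl
      obtain ⟨x, -, y, -, hxy⟩ := hΩ
      exact hxy (Subsingleton.elim x y)
    obtain ⟨i, hi⟩ := exists_single_notMem_of_ne_top hH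
    have hinj := injOn_factor_of_pairwise i (hdist.mono' fun x y h => by omega)
    have ih' := ih _ _ (hΩ.image_of_injOn hinj) (pairwise_image_factor i hdist)
    rw [Nat.card_image_of_injOn hinj] at ih'
    rw [← LinearEquiv.finrank_quotient_sup_span_singleton hi, pow_succ, pow_succ, ← mul_assoc]
    exact Nat.mul_le_mul_right _ ih'

end QuotientHamming

theorem singleton_bound_qsc_general (F : Type) [Field F] [Fintype F] [DecidableEq F]
    (q m r d : ℕ) (hq : Fintype.card F = q)
    (H : Submodule F (Fin m → F)) (hr : Module.finrank F H = r)
    (Ω : Set ((Fin m → F) ⧸ H)) (hΩ : ∃ x ∈ Ω, ∃ y ∈ Ω, x ≠ y)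
    (hdist : ∀ x ∈ Ω, ∀ y ∈ Ω, x ≠ y → d ≤ qnormH H (x - y)) :
    Nat.card Ω * q ^ (d - 1) ≤ q ^ (m - r) := by
  -- for `d = 0` (so `d - 1 = 0`) distinct cosets are still at distance at least `1`
  have hdist' : Ω.Pairwise fun x y => d - 1 + 1 ≤ qnormH H (x - y) := by
    intro x hx y hy hxy
    have hpos : qnormH H (x - y) ≠ 0 := qnormH_eq_zero_iff.not.2 (sub_ne_zero.2 hxy)
    have := hdist x hx y hy hxy
    omega
  have hrank : Module.finrank F ((Fin m → F) ⧸ H) = m - r := by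
    rw [← hr, Submodule.finrank_quotient H, Module.finrank_fin_fun]
  simpa only [hq, hrank] using card_mul_card_pow_le_of_pairwise (d - 1) H Ω hΩ hdist'

/-- **Singleton bound for quotient space codes.** If `Ω ⊆ 𝔽_qᵐ ⧸ H`
(`dim H = r`, `|Ω| ≥ 2`) has pairwise quotient Hamming distances `≥ d`, then
`|Ω| · q^(d-1) ≤ q^(m-r)`. -/
theorem singleton_bound_qsc (F : Type) [Field F] [Fintype F] [DecidableEq F]
    (q m r d : ℕ) (hq : Fintype.card F = q) (hd : 1 ≤ d)
    (H : Submodule F (Fin m → F)) (hr : Module.finrank F H = r)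
    (Ω : Set ((Fin m → F) ⧸ H)) (hΩ : ∃ x ∈ Ω, ∃ y ∈ Ω, x ≠ y)
    (hdist : ∀ x ∈ Ω, ∀ y ∈ Ω, x ≠ y → d ≤ qnormH H (x - y)) :
    Nat.card Ω * q ^ (d - 1) ≤ q ^ (m - r) :=
  singleton_bound_qsc_general F q m r d hq H hr Ω hΩ hdist
end
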